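/- arXiv:1810.02863 — 2 statements merged into one kernel-verified Lean document; each statement's English description precedes it below -/
import Mathlib

section
/- Let b ∈ ℝ, let f : ℝ → ℝ be smooth, and let s : ℝ → ℝ satisfy s'(w) = w·f(w) for all w. If u : ℝ × ℝ → ℝ is a smooth solution of the generalized Kawahara equation, then the conservation law with density ρ₂ = u² holds: for all (x,t), ∂_t(u²) = ∂_x( 2u ∂_x⁴u − 2 ∂_x u · ∂_x³u + (∂_x²u)² + 2b u ∂_x²u − b (∂_x u)² + 2 s(u) ), where all expressions are evaluated at (x,t). -/
/-- Partial derivative in the first (space) variable. -/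
noncomputable def px (u : ℝ × ℝ → ℝ) : ℝ × ℝ → ℝ :=
  fun p => deriv (fun x => u (x, p.2)) p.1

/-- Partial derivative in the second (time) variable. -/
noncomputable def pt (u : ℝ × ℝ → ℝ) : ℝ × ℝ → ℝ :=
  fun p => deriv (fun t => u (p.1, t)) p.2

lemma px_eq_fderiv {u : ℝ × ℝ → ℝ} (hu : ContDiff ℝ (⊤ : ℕ∞) u) :
    px u = fun p => fderiv ℝ u p (1, 0) := by
  funext p
  have hL : HasFDerivAt u (fderiv ℝ u p) p :=
    (hu.differentiable (by simp) p).hasFDerivAt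
  have hg : HasDerivAt (fun x : ℝ => (x, p.2)) ((1 : ℝ), (0 : ℝ)) p.1 :=
    (hasDerivAt_id p.1).prodMk (hasDerivAt_const p.1 p.2)
  exact (hL.comp_hasDerivAt p.1 hg).deriv

lemma px_contDiff {u : ℝ × ℝ → ℝ} (hu : ContDiff ℝ (⊤ : ℕ∞) u) : ContDiff ℝ (⊤ : ℕ∞) (px u) := by
  rw [px_eq_fderiv hu]
  exact (hu.fderiv_right (by simp)).clm_apply contDiff_const

lemma pxk_contDiff {u : ℝ × ℝ → ℝ} (hu : ContDiff ℝ (⊤ : ℕ∞) u) (k : ℕ) :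
    ContDiff ℝ (⊤ : ℕ∞) (px^[k] u) := by
  induction k with
  | zero => exact hu
  | succ n ih => rw [Function.iterate_succ_apply']; exact px_contDiff ih

lemma hasDerivAt_slice_x {g : ℝ × ℝ → ℝ} (hg : ContDiff ℝ (⊤ : ℕ∞) g) (x t : ℝ) :
    HasDerivAt (fun x' => g (x', t)) (px g (x, t)) x := by
  have h : DifferentiableAt ℝ (fun x' => g (x', t)) x :=
    ((hg.comp (contDiff_id.prodMk contDiff_const)).differentiable (by simp)).differentiableAt
  exact h.hasDerivAt

lemma hasDerivAt_slice_t {g : ℝ × ℝ → ℝ} (hg : ContDiff ℝ (⊤ : ℕ∞) g) (x t : ℝ) :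
    HasDerivAt (fun t' => g (x, t')) (pt g (x, t)) t := by
  have h : DifferentiableAt ℝ (fun t' => g (x, t')) t :=
    ((hg.comp (contDiff_const.prodMk contDiff_id)).differentiable (by simp)).differentiableAt
  exact h.hasDerivAt

theorem gke_conservation_law_density_u_sq
    (b : ℝ) (f : ℝ → ℝ) (hf : ContDiff ℝ (⊤ : ℕ∞) f)
    (s : ℝ → ℝ) (hs : ∀ w, HasDerivAt s (w * f w) w)
    (u : ℝ × ℝ → ℝ) (hu : ContDiff ℝ (⊤ : ℕ∞) u)
    (hgke : ∀ p : ℝ × ℝ,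
      pt u p = px^[5] u p + b * px^[3] u p + f (u p) * px u p) :
    ∀ p : ℝ × ℝ,
      pt (fun q => (u q) ^ 2) p
        = px (fun q =>
            2 * u q * px^[4] u q - 2 * px u q * px^[3] u q
              + (px^[2] u q) ^ 2 + 2 * b * u q * px^[2] u q
              - b * (px u q) ^ 2 + 2 * s (u q)) p := by
  rintro ⟨x, t⟩
  -- slice derivative facts in x
  have hk : ∀ k : ℕ, HasDerivAt (fun x' => px^[k] u (x', t)) (px^[k+1] u (x, t)) x := by
    intro k
    have h := hasDerivAt_slice_x (pxk_contDiff hu k) x t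
    simpa [Function.iterate_succ_apply'] using h
  have h0 : HasDerivAt (fun x' => u (x', t)) (px u (x, t)) x := hasDerivAt_slice_x hu x t
  have h1x : HasDerivAt (fun x' => px u (x', t)) (px^[2] u (x, t)) x := by
    have := hk 1; simpa [Function.iterate_one] using this
  -- chain rule for s ∘ u
  have hS : HasDerivAt (fun x' => s (u (x', t)))
      (u (x, t) * f (u (x, t)) * px u (x, t)) x :=
    (hs (u (x, t))).comp x h0
  -- build the big x-derivative
  have h1 := (h0.const_mul (2 : ℝ)).mul (hk 4)
  have h2 := (h1x.const_mul (2 : ℝ)).mul (hk 3)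
  have h3 := (hk 2).pow 2
  have h4 := (h0.const_mul (2 * b)).mul (hk 2)
  have h5 := (h1x.pow 2).const_mul b
  have h6 := hS.const_mul (2 : ℝ)
  have total := ((((h1.sub h2).add h3).add h4).sub h5).add h6
  -- time derivative of u^2
  have htu : HasDerivAt (fun t' => u (x, t')) (pt u (x, t)) t := hasDerivAt_slice_t hu x t
  have hL : pt (fun q => (u q) ^ 2) (x, t)
      = (2 : ℕ) * u (x, t) ^ 1 * pt u (x, t) := (htu.pow 2).deriv
  have hR := total.deriv
  rw [hL, show px (fun q =>
            2 * u q * px^[4] u q - 2 * px u q * px^[3] u q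
              + (px^[2] u q) ^ 2 + 2 * b * u q * px^[2] u q
              - b * (px u q) ^ 2 + 2 * s (u q)) (x, t) = _ from hR]
  rw [hgke (x, t)]
  push_cast
  ring
end

section
/- Let b, γ, δ, c ∈ ℝ with γ ≠ 0, and let f(w) = γ ln(w + c) + δ (defined for w + c > 0). For every ε ∈ ℝ, if u : ℝ × ℝ → ℝ is a smooth solution of the generalized Kawahara equation with this f satisfying u(x,t) + c > 0 everywhere, then v(x,t) := e^{ε/γ} ( u(x + ε t, t) + c ) − c satisfies v(x,t) + c > 0 everywhere and is again a smooth solution of the same equation. -/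
lemma px_eq (u : ℝ × ℝ → ℝ) (hu : ContDiff ℝ (⊤ : ℕ∞) u) :
    px u = fun p => fderiv ℝ u p (1, 0) := by
  funext p
  have h1 : HasDerivAt (fun x : ℝ => ((x, p.2) : ℝ × ℝ)) (1, 0) p.1 :=
    (hasDerivAt_id p.1).prodMk (hasDerivAt_const p.1 p.2)
  have h2 := (hu.differentiable (by simp) (p.1, p.2)).hasFDerivAt.comp_hasDerivAt p.1 h1
  simpa [px, Function.comp_def] using h2.deriv

lemma pt_eq (u : ℝ × ℝ → ℝ) (hu : ContDiff ℝ (⊤ : ℕ∞) u) :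
    pt u = fun p => fderiv ℝ u p (0, 1) := by
  funext p
  have h1 : HasDerivAt (fun t : ℝ => ((p.1, t) : ℝ × ℝ)) (0, 1) p.2 :=
    (hasDerivAt_const p.2 p.1).prodMk (hasDerivAt_id p.2)
  have h2 := (hu.differentiable (by simp) (p.1, p.2)).hasFDerivAt.comp_hasDerivAt p.2 h1
  simpa [pt, Function.comp_def] using h2.deriv

lemma px_smooth (u : ℝ × ℝ → ℝ) (hu : ContDiff ℝ (⊤ : ℕ∞) u) : ContDiff ℝ (⊤ : ℕ∞) (px u) := by
  rw [px_eq u hu]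
  exact (hu.fderiv_right (by simp)).clm_apply contDiff_const

lemma px_shift (ε A B : ℝ) (g : ℝ × ℝ → ℝ) (hg : ContDiff ℝ (⊤ : ℕ∞) g) :
    px (fun q : ℝ × ℝ => A * g (q.1 + ε * q.2, q.2) + B)
      = fun p : ℝ × ℝ => A * px g (p.1 + ε * p.2, p.2) := by
  funext p
  have h1 : HasDerivAt (fun x : ℝ => ((x + ε * p.2, p.2) : ℝ × ℝ)) (1, 0) p.1 :=
    ((hasDerivAt_id p.1).add_const _).prodMk (hasDerivAt_const p.1 p.2)
  have h2 := (hg.differentiable (by simp) (p.1 + ε * p.2, p.2)).hasFDerivAt.comp_hasDerivAt p.1 h1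
  have h3 : HasDerivAt (fun x : ℝ => A * g (x + ε * p.2, p.2) + B)
      (A * fderiv ℝ g (p.1 + ε * p.2, p.2) (1, 0)) p.1 := (h2.const_mul A).add_const B
  rw [px_eq g hg]
  simpa [px] using h3.deriv

lemma px_iter_shift (ε A : ℝ) (n : ℕ) :
    ∀ (B : ℝ) (g : ℝ × ℝ → ℝ), ContDiff ℝ (⊤ : ℕ∞) g →
    px^[n+1] (fun q : ℝ × ℝ => A * g (q.1 + ε * q.2, q.2) + B)
      = fun p : ℝ × ℝ => A * px^[n+1] g (p.1 + ε * p.2, p.2) := by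
  induction n with
  | zero => intro B g hg; simpa using px_shift ε A B g hg
  | succ n ih =>
    intro B g hg
    rw [Function.iterate_succ_apply, px_shift ε A B g hg]
    have h0 : (fun p : ℝ × ℝ => A * px g (p.1 + ε * p.2, p.2))
        = fun q : ℝ × ℝ => A * px g (q.1 + ε * q.2, q.2) + 0 := by funext q; ring
    rw [h0, ih 0 (px g) (px_smooth g hg), ← Function.iterate_succ_apply]

lemma pt_shift_aux (ε A c' : ℝ) (u : ℝ × ℝ → ℝ) (hu : ContDiff ℝ (⊤ : ℕ∞) u) (p : ℝ × ℝ) :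
    deriv (fun t => A * (u (p.1 + ε * t, t) + c') - c') p.2
      = A * fderiv ℝ u (p.1 + ε * p.2, p.2) (ε, 1) := by
  have h1 : HasDerivAt (fun t : ℝ => ((p.1 + ε * t, t) : ℝ × ℝ)) (ε, 1) p.2 := by
    have : HasDerivAt (fun t : ℝ => p.1 + ε * t) (ε * 1) p.2 :=
      ((hasDerivAt_id p.2).const_mul ε).const_add p.1
    simpa using this.prodMk (hasDerivAt_id p.2)
  have h2 := HasFDerivAt.comp_hasDerivAt p.2 ((hu.differentiable (by simp) _).hasFDerivAt) h1
  have h3 : HasDerivAt (fun t : ℝ => A * (u (p.1 + ε * t, t) + c') - c')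
      (A * fderiv ℝ u (p.1 + ε * p.2, p.2) (ε, 1)) p.2 :=
    ((h2.add_const c').const_mul A).sub_const c'
  exact h3.deriv

theorem gke_log_case_point_symmetry
    (b γ δ c : ℝ) (hγ : γ ≠ 0) (ε : ℝ)
    (f : ℝ → ℝ) (hfdef : ∀ w, w + c > 0 → f w = γ * Real.log (w + c) + δ)
    (u : ℝ × ℝ → ℝ) (hu : ContDiff ℝ (⊤ : ℕ∞) u)
    (hpos : ∀ p : ℝ × ℝ, u p + c > 0)
    (hgke : ∀ p : ℝ × ℝ,
      pt u p = px^[5] u p + b * px^[3] u p + f (u p) * px u p) :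
    (∀ p : ℝ × ℝ,
      (Real.exp (ε / γ) * (u (p.1 + ε * p.2, p.2) + c) - c) + c > 0) ∧
    ContDiff ℝ (⊤ : ℕ∞)
      (fun q : ℝ × ℝ => Real.exp (ε / γ) * (u (q.1 + ε * q.2, q.2) + c) - c) ∧
    ∀ p : ℝ × ℝ,
      pt (fun q : ℝ × ℝ =>
            Real.exp (ε / γ) * (u (q.1 + ε * q.2, q.2) + c) - c) p
        = px^[5] (fun q : ℝ × ℝ =>
            Real.exp (ε / γ) * (u (q.1 + ε * q.2, q.2) + c) - c) p
          + b * px^[3] (fun q : ℝ × ℝ =>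
              Real.exp (ε / γ) * (u (q.1 + ε * q.2, q.2) + c) - c) p
          + f (Real.exp (ε / γ) * (u (p.1 + ε * p.2, p.2) + c) - c)
            * px (fun q : ℝ × ℝ =>
                Real.exp (ε / γ) * (u (q.1 + ε * q.2, q.2) + c) - c) p := by
  set A : ℝ := Real.exp (ε / γ) with hA
  have hApos : 0 < A := Real.exp_pos _
  have hσ : ContDiff ℝ (⊤ : ℕ∞) (fun q : ℝ × ℝ => ((q.1 + ε * q.2, q.2) : ℝ × ℝ)) :=
    (contDiff_fst.add (contDiff_const.mul contDiff_snd)).prodMk contDiff_snd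
  -- positivity
  have hposv : ∀ p : ℝ × ℝ, (A * (u (p.1 + ε * p.2, p.2) + c) - c) + c > 0 := by
    intro p
    have := mul_pos hApos (hpos (p.1 + ε * p.2, p.2))
    linarith
  refine ⟨hposv, ?_, ?_⟩
  · exact (contDiff_const.mul ((hu.comp hσ).add contDiff_const)).sub contDiff_const
  · intro p
    set σp : ℝ × ℝ := (p.1 + ε * p.2, p.2) with hσp
    -- rewrite the function into the A * g + B form
    have hv : (fun q : ℝ × ℝ => A * (u (q.1 + ε * q.2, q.2) + c) - c)
        = fun q : ℝ × ℝ => A * u (q.1 + ε * q.2, q.2) + (A * c - c) := by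
      funext q; ring
    -- left-hand side
    have hL : pt (fun q : ℝ × ℝ => A * (u (q.1 + ε * q.2, q.2) + c) - c) p
        = A * fderiv ℝ u σp (ε, 1) := by
      simpa [pt] using pt_shift_aux ε A c u hu p
    have hlin : fderiv ℝ u σp (ε, 1) = ε * px u σp + pt u σp := by
      simp only [px_eq u hu, pt_eq u hu]
      have h1 : ((ε, 1) : ℝ × ℝ) = ε • (1, 0) + (0, 1) := by simp [Prod.ext_iff]
      rw [h1, map_add, map_smul]; simp [smul_eq_mul]
    -- spatial derivatives
    have h5 : px^[5] (fun q : ℝ × ℝ => A * (u (q.1 + ε * q.2, q.2) + c) - c) p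
        = A * px^[5] u σp := by
      rw [hv, px_iter_shift ε A 4 (A * c - c) u hu]
    have h3 : px^[3] (fun q : ℝ × ℝ => A * (u (q.1 + ε * q.2, q.2) + c) - c) p
        = A * px^[3] u σp := by
      rw [hv, px_iter_shift ε A 2 (A * c - c) u hu]
    have h1 : px (fun q : ℝ × ℝ => A * (u (q.1 + ε * q.2, q.2) + c) - c) p
        = A * px u σp := by
      rw [hv, px_shift ε A (A * c - c) u hu]
    -- f value
    have hfv : f (A * (u σp + c) - c) = f (u σp) + ε := by
      have hup := hpos σp
      have hvpos : (A * (u σp + c) - c) + c > 0 := by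
        have := mul_pos hApos hup; linarith
      rw [hfdef _ hvpos, hfdef _ hup]
      have : A * (u σp + c) - c + c = A * (u σp + c) := by ring
      rw [this, Real.log_mul (ne_of_gt hApos) (ne_of_gt hup), hA, Real.log_exp]
      field_simp
      ring
    rw [hL, hlin, h5, h3, h1, hfv, hgke σp]
    ring
end
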